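/- Let φ(z) = (86z² − 1068z − 338)/(z² + 7z − 338), a degree-2 rational map on P¹ over ℚ. Then the model [F,G] with F = 86X² − 1068XY − 338Y² and G = X² + 7XY − 338Y² is a ℤ-minimal model of [φ], and the first eight points of the forward orbit of 0 under φ are the integers 0, 1, 4, 11, 12, 7, 15, −374; in particular the orbit of 0 contains at least 8 integers. -/

import Mathlib

noncomputable section

/-- Determinant of the Sylvester matrix of two polynomials, given by coefficient
sequences `p` (regarded as having degree `m`) and `q` (regarded as having degree `n`). -/
def sylRes {K : Type*} [CommRing K] (m n : ℕ) (p q : ℕ → K) : K :=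
  Matrix.det (Matrix.of fun i j : Fin (n + m) =>
    if (i : ℕ) < n then
      (if (i : ℕ) ≤ (j : ℕ) ∧ (j : ℕ) ≤ (i : ℕ) + m then p (m - ((j : ℕ) - (i : ℕ))) else 0)
    else
      (if (i : ℕ) - n ≤ (j : ℕ) ∧ (j : ℕ) ≤ ((i : ℕ) - n) + n then
        q (n - ((j : ℕ) - ((i : ℕ) - n))) else 0))

/-- The binary form of degree `d` with coefficient sequence `f`
(`f i` is the coefficient of `X^i Y^(d-i)`). -/
def toForm {K : Type*} [CommRing K] (d : ℕ) (f : ℕ → K) : MvPolynomial (Fin 2) K :=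
  ∑ i ∈ Finset.range (d + 1),
    MvPolynomial.C (f i) * MvPolynomial.X 0 ^ i * MvPolynomial.X 1 ^ (d - i)

/-- Substitution `X ↦ A₀₀ X + A₀₁ Y`, `Y ↦ A₁₀ X + A₁₁ Y`. -/
def substMat {K : Type*} [CommRing K] (A : Matrix (Fin 2) (Fin 2) K)
    (P : MvPolynomial (Fin 2) K) : MvPolynomial (Fin 2) K :=
  MvPolynomial.eval₂ MvPolynomial.C
    (fun k => MvPolynomial.C (A k 0) * MvPolynomial.X 0 + MvPolynomial.C (A k 1) * MvPolynomial.X 1) P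

/-- Coefficient sequence of a binary form of degree `d`. -/
def coeffVec {K : Type*} [CommRing K] (d : ℕ) (P : MvPolynomial (Fin 2) K) : ℕ → K :=
  fun i => MvPolynomial.coeff (Finsupp.single (0 : Fin 2) i + Finsupp.single (1 : Fin 2) (d - i)) P

/-- Coefficients of `F_A = δ·(F∘A) − β·(G∘A)` for `A = [[α,β],[γ,δ]]`. -/
def FA {K : Type*} [CommRing K] (d : ℕ) (f g : ℕ → K) (A : Matrix (Fin 2) (Fin 2) K) : ℕ → K :=
  coeffVec d (MvPolynomial.C (A 1 1) * substMat A (toForm d f) -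
    MvPolynomial.C (A 0 1) * substMat A (toForm d g))

/-- Coefficients of `G_A = −γ·(F∘A) + α·(G∘A)` for `A = [[α,β],[γ,δ]]`. -/
def GA {K : Type*} [CommRing K] (d : ℕ) (f g : ℕ → K) (A : Matrix (Fin 2) (Fin 2) K) : ℕ → K :=
  coeffVec d (-(MvPolynomial.C (A 1 0)) * substMat A (toForm d f) +
    MvPolynomial.C (A 0 0) * substMat A (toForm d g))

/-- The ideal `Res_R([φ])`: generated by the resultants of all models over `R`
of the form `[F,G]^{(λ,A)}` with `(λ,A) ∈ K^× × GL₂(K)`. -/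
def ResIdeal (R : Type*) {K : Type*} [CommRing R] [Field K] [Algebra R K]
    (d : ℕ) (f g : ℕ → K) : Ideal R :=
  Ideal.span { r : R | ∃ (l : K) (A : Matrix (Fin 2) (Fin 2) K), l ≠ 0 ∧ A.det ≠ 0 ∧
    (∀ i, ∃ a : R, algebraMap R K a = l * FA d f g A i) ∧
    (∀ i, ∃ b : R, algebraMap R K b = l * GA d f g A i) ∧
    algebraMap R K r = sylRes d d (fun i => l * FA d f g A i) (fun i => l * GA d f g A i) }

/-- The ideal `Res_R([φ]₁)`: as `ResIdeal` but with `A` restricted to affine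
(upper-triangular) transformations. -/
def AffResIdeal (R : Type*) {K : Type*} [CommRing R] [Field K] [Algebra R K]
    (d : ℕ) (f g : ℕ → K) : Ideal R :=
  Ideal.span { r : R | ∃ (l : K) (A : Matrix (Fin 2) (Fin 2) K), l ≠ 0 ∧ A.det ≠ 0 ∧ A 1 0 = 0 ∧
    (∀ i, ∃ a : R, algebraMap R K a = l * FA d f g A i) ∧
    (∀ i, ∃ b : R, algebraMap R K b = l * GA d f g A i) ∧
    algebraMap R K r = sylRes d d (fun i => l * FA d f g A i) (fun i => l * GA d f g A i) }

/-
The resultant of `[F, G]` is `218618400 = 2⁵·3·5²·7²·11·13²`, and the model `[F, G]^{(λ, A)}`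
has resultant `λ⁴ det(A)⁶ Res(F, G)`, so minimality says that `λ² det(A)³` is an integer whenever
the model is integral. Composing `A` with a matrix of `SL₂(ℤ)` and then with a scalar, which keeps
the model integral and `λ² det(A)³` unchanged, we may take `A = [[t, b], [0, 1]]`. Integrality of
the resultant `(λ² t³)² · Res(F, G)` leaves only primes `p` with `p² ∣ Res(F, G)`, that is
`2, 5, 7, 13`, as possible denominators of `λ² t³`. At such a `p`, a negative valuation of `λ² t³`
and the integrality of four coefficients of the model force `p ∣ formG0 m n`, `p ∣ formF1 m n` and
`p² ∣ formF0 m n` for `b = m / n` in lowest terms, which is impossible modulo `p` or `p²`.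
-/

open MvPolynomial

section QuadraticModels

variable {K : Type*} [CommRing K]

lemma coeffVec_toForm (d : ℕ) (f : ℕ → K) (i : ℕ) :
    coeffVec d (toForm d f) i = if i ≤ d then f i else 0 := by
  have key : ∀ j ∈ Finset.range (d + 1),
      coeff (Finsupp.single (0 : Fin 2) i + Finsupp.single 1 (d - i))
        (C (f j) * X 0 ^ j * X 1 ^ (d - j)) = if j = i then f j else 0 := by
    intro j hj
    rw [Finset.mem_range] at hj
    rw [C_mul_X_pow_eq_monomial, X_pow_eq_monomial, monomial_mul, mul_one, coeff_monomial]
    congr 1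
    apply propext
    constructor
    · intro h
      simpa using DFunLike.congr_fun h 0
    · rintro rfl
      rfl
  rw [coeffVec, toForm, coeff_sum]
  refine (Finset.sum_congr rfl key).trans ?_
  simp only [Finset.sum_ite_eq', Finset.mem_range, Nat.lt_succ_iff]

-- The coefficients of `f(αX + βY, γX + δY)`, where `A = [[α, β], [γ, δ]]`.
def quadSubst (A : Matrix (Fin 2) (Fin 2) K) (f : ℕ → K) : ℕ → K
  | 0 => f 2 * A 0 1 ^ 2 + f 1 * A 0 1 * A 1 1 + f 0 * A 1 1 ^ 2
  | 1 => 2 * f 2 * A 0 0 * A 0 1 + f 1 * (A 0 0 * A 1 1 + A 0 1 * A 1 0) + 2 * f 0 * A 1 0 * A 1 1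
  | 2 => f 2 * A 0 0 ^ 2 + f 1 * A 0 0 * A 1 0 + f 0 * A 1 0 ^ 2
  | _ + 3 => 0

lemma substMat_toForm_two (A : Matrix (Fin 2) (Fin 2) K) (f : ℕ → K) :
    substMat A (toForm 2 f) = toForm 2 (quadSubst A f) := by
  simp only [toForm, substMat, quadSubst, Finset.sum_range_succ, Finset.sum_range_zero, zero_add,
    eval₂_add, eval₂_mul, eval₂_pow, eval₂_C, eval₂_X, map_add, map_mul, map_pow, map_ofNat]
  ring

lemma coeffVec_substMat_toForm_two (A : Matrix (Fin 2) (Fin 2) K) (f : ℕ → K) (i : ℕ) :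
    coeffVec 2 (substMat A (toForm 2 f)) i = quadSubst A f i := by
  rw [substMat_toForm_two, coeffVec_toForm]
  rcases i with _ | _ | _ | i <;> simp [quadSubst]

lemma FA_apply (d : ℕ) (f g : ℕ → K) (A : Matrix (Fin 2) (Fin 2) K) (i : ℕ) :
    FA d f g A i = A 1 1 * coeffVec d (substMat A (toForm d f)) i
      - A 0 1 * coeffVec d (substMat A (toForm d g)) i := by
  simp only [FA, coeffVec, coeff_sub, coeff_C_mul]

lemma GA_apply (d : ℕ) (f g : ℕ → K) (A : Matrix (Fin 2) (Fin 2) K) (i : ℕ) :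
    GA d f g A i = -A 1 0 * coeffVec d (substMat A (toForm d f)) i
      + A 0 0 * coeffVec d (substMat A (toForm d g)) i := by
  simp only [GA, coeffVec, coeff_add, neg_mul, coeff_neg, coeff_C_mul]

lemma FA_two (f g : ℕ → K) (A : Matrix (Fin 2) (Fin 2) K) (i : ℕ) :
    FA 2 f g A i = A 1 1 * quadSubst A f i - A 0 1 * quadSubst A g i := by
  rw [FA_apply, coeffVec_substMat_toForm_two, coeffVec_substMat_toForm_two]

lemma GA_two (f g : ℕ → K) (A : Matrix (Fin 2) (Fin 2) K) (i : ℕ) :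
    GA 2 f g A i = -A 1 0 * quadSubst A f i + A 0 0 * quadSubst A g i := by
  rw [GA_apply, coeffVec_substMat_toForm_two, coeffVec_substMat_toForm_two]

lemma FA_two_comp (f g : ℕ → K) (l : K) (A B : Matrix (Fin 2) (Fin 2) K) (i : ℕ) :
    FA 2 (fun i => l * FA 2 f g A i) (fun i => l * GA 2 f g A i) B i = l * FA 2 f g (A * B) i := by
  rcases i with _ | _ | _ | i <;>
  simp only [FA_two, GA_two, quadSubst, Matrix.mul_apply, Fin.sum_univ_two] <;> ring

lemma GA_two_comp (f g : ℕ → K) (l : K) (A B : Matrix (Fin 2) (Fin 2) K) (i : ℕ) :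
    GA 2 (fun i => l * FA 2 f g A i) (fun i => l * GA 2 f g A i) B i = l * GA 2 f g (A * B) i := by
  rcases i with _ | _ | _ | i <;>
  simp only [GA_two, FA_two, quadSubst, Matrix.mul_apply, Fin.sum_univ_two] <;> ring

lemma FA_two_smul (f g : ℕ → K) (c : K) (A : Matrix (Fin 2) (Fin 2) K) (i : ℕ) :
    FA 2 f g (c • A) i = c ^ 3 * FA 2 f g A i := by
  rcases i with _ | _ | _ | i <;>
  simp only [FA_two, quadSubst, Matrix.smul_apply, smul_eq_mul] <;> ring

lemma GA_two_smul (f g : ℕ → K) (c : K) (A : Matrix (Fin 2) (Fin 2) K) (i : ℕ) :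
    GA 2 f g (c • A) i = c ^ 3 * GA 2 f g A i := by
  rcases i with _ | _ | _ | i <;>
  simp only [GA_two, quadSubst, Matrix.smul_apply, smul_eq_mul] <;> ring

lemma quadSubst_mem {S : Type*} [SetLike S K] [SubringClass S K] (s : S) {f : ℕ → K}
    {A : Matrix (Fin 2) (Fin 2) K} (hf : ∀ i, f i ∈ s) (hA : ∀ i j, A i j ∈ s) (i : ℕ) :
    quadSubst A f i ∈ s := by
  rcases i with _ | _ | _ | i <;> simp only [quadSubst] <;>
    apply_rules [add_mem, mul_mem, pow_mem, ofNat_mem, zero_mem]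

lemma FA_two_mem {S : Type*} [SetLike S K] [SubringClass S K] (s : S) {f g : ℕ → K}
    {A : Matrix (Fin 2) (Fin 2) K} (hf : ∀ i, f i ∈ s) (hg : ∀ i, g i ∈ s) (hA : ∀ i j, A i j ∈ s)
    (i : ℕ) : FA 2 f g A i ∈ s := by
  rw [FA_two]
  apply_rules [sub_mem, mul_mem, quadSubst_mem]

lemma GA_two_mem {S : Type*} [SetLike S K] [SubringClass S K] (s : S) {f g : ℕ → K}
    {A : Matrix (Fin 2) (Fin 2) K} (hf : ∀ i, f i ∈ s) (hg : ∀ i, g i ∈ s) (hA : ∀ i j, A i j ∈ s)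
    (i : ℕ) : GA 2 f g A i ∈ s := by
  rw [GA_two]
  apply_rules [add_mem, mul_mem, neg_mem, quadSubst_mem]

lemma sylRes_two (p q : ℕ → K) :
    sylRes 2 2 p q =
      (p 2 * q 0 - p 0 * q 2) ^ 2 - (p 2 * q 1 - p 1 * q 2) * (p 1 * q 0 - p 0 * q 1) := by
  have h : (Matrix.of fun i j : Fin (2 + 2) =>
      if (i : ℕ) < 2 then
        (if (i : ℕ) ≤ (j : ℕ) ∧ (j : ℕ) ≤ (i : ℕ) + 2 then p (2 - ((j : ℕ) - (i : ℕ))) else 0)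
      else
        (if (i : ℕ) - 2 ≤ (j : ℕ) ∧ (j : ℕ) ≤ ((i : ℕ) - 2) + 2 then
          q (2 - ((j : ℕ) - ((i : ℕ) - 2))) else 0)) =
      !![p 2, p 1, p 0, 0; 0, p 2, p 1, p 0; q 2, q 1, q 0, 0; 0, q 2, q 1, q 0] := by
    ext i j
    fin_cases i <;> fin_cases j <;> rfl
  rw [sylRes, h, Matrix.det_succ_row_zero]
  simp [Fin.sum_univ_succ, Matrix.det_fin_three, Fin.succAbove]
  ring

lemma sylRes_FA_GA_two (f g : ℕ → K) (l : K) (A : Matrix (Fin 2) (Fin 2) K) :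
    sylRes 2 2 (fun i => l * FA 2 f g A i) (fun i => l * GA 2 f g A i) =
      l ^ 4 * A.det ^ 6 * sylRes 2 2 f g := by
  simp only [sylRes_two, FA_two, GA_two, quadSubst, Matrix.det_fin_two]
  ring

end QuadraticModels

lemma mem_resIdeal_two {R K : Type*} [CommRing R] [Field K] [Algebra R K] {f g : ℕ → K}
    (hf : ∀ i, f i ∈ (algebraMap R K).range) (hg : ∀ i, g i ∈ (algebraMap R K).range) {r : R}
    (hr : algebraMap R K r = sylRes 2 2 f g) : r ∈ ResIdeal R 2 f g := by
  have h1 : ∀ i j, (1 : Matrix (Fin 2) (Fin 2) K) i j ∈ (algebraMap R K).range := by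
    intro i j
    rw [Matrix.one_apply]
    split_ifs
    · exact one_mem _
    · exact zero_mem _
  refine Ideal.subset_span ⟨1, 1, one_ne_zero, by simp, fun i => ?_, fun i => ?_, ?_⟩
  · simpa using FA_two_mem _ hf hg h1 i
  · simpa using GA_two_mem _ hf hg h1 i
  · rw [hr, sylRes_FA_GA_two]
    simp

lemma Rat.exists_isCoprime_proportional (γ δ : ℚ) :
    ∃ c d : ℤ, γ * d = δ * c ∧ IsCoprime c d := by
  by_cases hδ : δ = 0
  · exact ⟨1, 0, by simp [hδ], isCoprime_one_left⟩
  · refine ⟨(γ / δ).num, (γ / δ).den, ?_, ?_⟩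
    · have h := Rat.num_div_den (γ / δ)
      field_simp at h
      linear_combination -h
    · rw [Int.isCoprime_iff_gcd_eq_one]
      exact (γ / δ).reduced

lemma exists_affine_integral_model (f g : ℕ → ℚ) {l : ℚ} {A : Matrix (Fin 2) (Fin 2) ℚ}
    (hl : l ≠ 0) (hA : A.det ≠ 0)
    (hF : ∀ i, l * FA 2 f g A i ∈ (algebraMap ℤ ℚ).range)
    (hG : ∀ i, l * GA 2 f g A i ∈ (algebraMap ℤ ℚ).range) :
    ∃ l' t b : ℚ, l' ≠ 0 ∧ t ≠ 0 ∧ l' ^ 2 * t ^ 3 = l ^ 2 * A.det ^ 3 ∧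
      (∀ i, l' * FA 2 f g !![t, b; 0, 1] i ∈ (algebraMap ℤ ℚ).range) ∧
      (∀ i, l' * GA 2 f g !![t, b; 0, 1] i ∈ (algebraMap ℤ ℚ).range) := by
  -- `(c, d)` is primitive and proportional to the bottom row of `A`, so `N ∈ SL₂(ℤ)` and `A * N` is
  -- upper triangular.
  obtain ⟨c, d, hcd, x, y, hxy⟩ := Rat.exists_isCoprime_proportional (A 1 0) (A 1 1)
  have hxy' : (x : ℚ) * c + y * d = 1 := by exact_mod_cast hxy
  set N : Matrix (Fin 2) (Fin 2) ℚ := !![(d : ℚ), x; -c, y]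
  set α' := A 0 0 * d - A 0 1 * c
  set β' := A 0 0 * x + A 0 1 * y
  set δ' := A 1 0 * x + A 1 1 * y
  have hdet : α' * δ' = A.det := by
    rw [Matrix.det_fin_two]
    linear_combination (A 0 0 * x + A 0 1 * y) * hcd + (A 0 0 * A 1 1 - A 0 1 * A 1 0) * hxy'
  have hδ' : δ' ≠ 0 := fun h => hA (by rw [← hdet, h, mul_zero])
  have hα' : α' ≠ 0 := fun h => hA (by rw [← hdet, h, zero_mul])
  have hAN : A * N = δ' • !![α' / δ', β' / δ'; 0, 1] := by
    ext i j
    fin_cases i <;> fin_cases j <;> simp [N, Matrix.mul_apply] <;> field_simp <;>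
      first | rfl | linear_combination hcd | ring
  have hN : ∀ i j, N i j ∈ (algebraMap ℤ ℚ).range := by
    intro i j
    fin_cases i <;> fin_cases j <;> simp [N, intCast_mem]
  refine ⟨l * δ' ^ 3, α' / δ', β' / δ', by positivity, div_ne_zero hα' hδ', ?_,
    fun i => ?_, fun i => ?_⟩
  · rw [← hdet]
    field_simp
  · have h := FA_two_mem _ hF hG hN i
    rwa [FA_two_comp, hAN, FA_two_smul, ← mul_assoc] at h
  · have h := GA_two_mem _ hF hG hN i
    rwa [GA_two_comp, hAN, GA_two_smul, ← mul_assoc] at h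

lemma Rat.den_sq_dvd_of_sq_mul_eq_intCast {w : ℚ} {k s : ℤ} (h : w ^ 2 * k = s) :
    (w.den : ℤ) ^ 2 ∣ k := by
  have hden : (w.den : ℚ) ≠ 0 := by positivity
  have hq : (w.num : ℚ) ^ 2 * k = s * w.den ^ 2 := by
    rw [← Rat.num_div_den w] at h
    field_simp at h
    linear_combination h
  have hz : w.num ^ 2 * k = s * (w.den : ℤ) ^ 2 := by exact_mod_cast hq
  have hcop : IsCoprime ((w.den : ℤ) ^ 2) (w.num ^ 2) :=
    (Int.isCoprime_iff_gcd_eq_one.2 (by rw [Int.gcd_comm]; exact w.reduced)).pow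
  exact hcop.dvd_of_dvd_mul_left ⟨s, by rw [hz, mul_comm]⟩

lemma Rat.not_dvd_den_of_padicValRat_nonneg {p : ℕ} [hp : Fact p.Prime] {w : ℚ}
    (h : 0 ≤ padicValRat p w) : ¬ p ∣ w.den := by
  intro hd
  have hnum : ¬ (p : ℤ) ∣ w.num := by
    intro hn
    have h1 : p ∣ Nat.gcd w.num.natAbs w.den := Nat.dvd_gcd (Int.natCast_dvd.1 hn) hd
    rw [w.reduced] at h1
    exact hp.out.one_lt.ne' (Nat.dvd_one.1 h1)
  have hval := one_le_padicValNat_of_dvd w.den_nz hd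
  rw [padicValRat, padicValInt.eq_zero_of_not_dvd hnum] at h
  omega

lemma Rat.den_eq_one_of_sq_mul_eq_intCast {w : ℚ} {k s : ℤ} (hs : w ^ 2 * k = s)
    (hw : ∀ p : ℕ, p.Prime → (p : ℤ) ^ 2 ∣ k → 0 ≤ padicValRat p w) : w.den = 1 := by
  rw [Nat.eq_one_iff_not_exists_prime_dvd]
  intro p hp hpd
  have := Fact.mk hp
  refine Rat.not_dvd_den_of_padicValRat_nonneg (hw p hp ?_) hpd
  exact (pow_dvd_pow_of_dvd (Int.natCast_dvd_natCast.2 hpd) 2).trans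
    (Rat.den_sq_dvd_of_sq_mul_eq_intCast hs)

lemma padicValRat_nonneg_of_mem_range {p : ℕ} {x : ℚ} (hx : x ∈ (algebraMap ℤ ℚ).range) :
    0 ≤ padicValRat p x := by
  obtain ⟨I, rfl⟩ := hx
  rw [eq_intCast, padicValRat.of_int]
  positivity

lemma pow_dvd_of_mul_intCast_mem_range {p : ℕ} [Fact p.Prime] {x : ℚ} (hx : x ≠ 0) {z : ℤ}
    (h : x * z ∈ (algebraMap ℤ ℚ).range) {k : ℕ} (hk : (k : ℤ) ≤ -padicValRat p x) :
    (p : ℤ) ^ k ∣ z := by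
  obtain ⟨I, hI⟩ := h
  rw [eq_intCast] at hI
  rcases eq_or_ne z 0 with rfl | hz
  · exact dvd_zero _
  have hval := congrArg (padicValRat p) hI
  rw [padicValRat.mul hx (Int.cast_ne_zero.2 hz), padicValRat.of_int, padicValRat.of_int] at hval
  rw [padicValInt_dvd_iff]
  right
  omega

def phiF : ℕ → ℚ := fun i => if i = 0 then -338 else if i = 1 then -1068 else
  if i = 2 then 86 else 0

def phiG : ℕ → ℚ := fun i => if i = 0 then -338 else if i = 1 then 7 else
  if i = 2 then 1 else 0

lemma phiF_mem_range (i : ℕ) : phiF i ∈ (algebraMap ℤ ℚ).range := by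
  unfold phiF
  split_ifs <;> apply_rules [neg_mem, ofNat_mem, zero_mem]

lemma phiG_mem_range (i : ℕ) : phiG i ∈ (algebraMap ℤ ℚ).range := by
  unfold phiG
  split_ifs <;> apply_rules [neg_mem, ofNat_mem, one_mem, zero_mem]

lemma sylRes_phiF_phiG : sylRes 2 2 phiF phiG = 218618400 := by
  norm_num [sylRes_two, phiF, phiG]

lemma Nat.Prime.eq_of_sq_dvd_218618400 {p : ℕ} (hp : p.Prime) (h : (p : ℤ) ^ 2 ∣ 218618400) :
    p = 2 ∨ p = 5 ∨ p = 7 ∨ p = 13 := by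
  have hp2 : p ^ 2 ∣ 218618400 := by exact_mod_cast h
  have hmem : p ∈ Nat.primeFactorsList 218618400 :=
    (Nat.mem_primeFactorsList (by norm_num)).2 ⟨hp, (dvd_pow_self p two_ne_zero).trans hp2⟩
  simp only [Nat.primeFactorsList_ofNat, List.mem_cons, List.not_mem_nil, or_false] at hmem
  rcases hmem with rfl | rfl | rfl | rfl | rfl | rfl | rfl | rfl | rfl | rfl | rfl | rfl | rfl <;>
    first | decide | exact absurd hp2 (by decide)

section Forms

variable {R : Type*} [CommRing R]

/- For `T = !![t, b; 0, 1]` and `b = m / n`, the `Y²`-coefficient of `G_T` is `t · formG0 m n / n²`,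
and the `XY`- and `Y²`-coefficients of `F_T` are `t · formF1 m n / n²` and `formF0 m n / n³`. -/
def formG0 (m n : R) : R := m ^ 2 + 7 * m * n - 338 * n ^ 2

def formF1 (m n : R) : R := -2 * m ^ 2 + 165 * m * n - 1068 * n ^ 2

def formF0 (m n : R) : R := -m ^ 3 + 79 * m ^ 2 * n - 730 * m * n ^ 2 - 338 * n ^ 3

lemma Int.cast_formG0 (m n : ℤ) : ((formG0 m n : ℤ) : R) = formG0 (m : R) n := by
  simp [formG0]

lemma Int.cast_formF1 (m n : ℤ) : ((formF1 m n : ℤ) : R) = formF1 (m : R) n := by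
  simp [formF1]

lemma Int.cast_formF0 (m n : ℤ) : ((formF0 m n : ℤ) : R) = formF0 (m : R) n := by
  simp [formF0]

end Forms

lemma false_of_forms_dvd_of_zmod {p : ℕ} (hp : p.Prime) {m n : ℤ} (hmn : IsCoprime m n)
    (hkey : ∀ M N : ZMod p, formG0 M N = 0 → formF1 M N = 0 → M = 0 ∧ N = 0)
    (hG0 : (p : ℤ) ∣ formG0 m n) (hF1 : (p : ℤ) ∣ formF1 m n) : False := by
  simp only [← ZMod.intCast_zmod_eq_zero_iff_dvd, Int.cast_formG0, Int.cast_formF1] at hG0 hF1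
  obtain ⟨hm, hn⟩ := hkey _ _ hG0 hF1
  rw [ZMod.intCast_zmod_eq_zero_iff_dvd] at hm hn
  exact hp.ne_one (by exact_mod_cast Int.isUnit_iff_natAbs_eq.1 (hmn.isUnit_of_dvd' hm hn))

lemma Int.natCast_dvd_iff_mul_eq_zero_zmod_sq {p : ℕ} (hp : p ≠ 0) (x : ℤ) :
    (p : ℤ) ∣ x ↔ (p : ZMod (p ^ 2)) * x = 0 := by
  have hcast : (p : ZMod (p ^ 2)) * x = ((p * x : ℤ) : ZMod (p ^ 2)) := by push_cast; rfl
  rw [hcast, ZMod.intCast_zmod_eq_zero_iff_dvd, Nat.cast_pow, pow_two,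
    mul_dvd_mul_iff_left (by exact_mod_cast hp)]

lemma false_of_forms_dvd_of_zmod_sq {p : ℕ} (hp : p.Prime) {m n : ℤ} (hmn : IsCoprime m n)
    (hkey : ∀ M N : ZMod (p ^ 2), (p : ZMod (p ^ 2)) * formG0 M N = 0 → p * formF1 M N = 0 →
      formF0 M N = 0 → p * M = 0 ∧ p * N = 0)
    (hG0 : (p : ℤ) ∣ formG0 m n) (hF1 : (p : ℤ) ∣ formF1 m n) (hF0 : (p : ℤ) ^ 2 ∣ formF0 m n) :
    False := by
  rw [Int.natCast_dvd_iff_mul_eq_zero_zmod_sq hp.ne_zero, Int.cast_formG0] at hG0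
  rw [Int.natCast_dvd_iff_mul_eq_zero_zmod_sq hp.ne_zero, Int.cast_formF1] at hF1
  rw [← Int.natCast_pow, ← ZMod.intCast_zmod_eq_zero_iff_dvd, Int.cast_formF0] at hF0
  obtain ⟨hm, hn⟩ := hkey _ _ hG0 hF1 hF0
  rw [← Int.natCast_dvd_iff_mul_eq_zero_zmod_sq hp.ne_zero] at hm hn
  exact hp.ne_one (by exact_mod_cast Int.isUnit_iff_natAbs_eq.1 (hmn.isUnit_of_dvd' hm hn))

lemma false_of_forms_dvd {p : ℕ} (hp : p = 2 ∨ p = 5 ∨ p = 7 ∨ p = 13) {m n : ℤ}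
    (hmn : IsCoprime m n) (hG0 : (p : ℤ) ∣ formG0 m n) (hF1 : (p : ℤ) ∣ formF1 m n)
    (hF0 : (p : ℤ) ^ 2 ∣ formF0 m n) : False := by
  rcases hp with rfl | rfl | rfl | rfl
  · exact false_of_forms_dvd_of_zmod_sq Nat.prime_two hmn
      (by unfold formG0 formF1 formF0; decide) hG0 hF1 hF0
  · exact false_of_forms_dvd_of_zmod_sq (by norm_num) hmn
      (by unfold formG0 formF1 formF0; decide) hG0 hF1 hF0
  · exact false_of_forms_dvd_of_zmod (by norm_num) hmn (by unfold formG0 formF1; decide) hG0 hF1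
  · exact false_of_forms_dvd_of_zmod (by norm_num) hmn (by unfold formG0 formF1; decide) hG0 hF1

lemma padicValRat_sq_mul_pow_three_nonneg {p : ℕ} (hp : p = 2 ∨ p = 5 ∨ p = 7 ∨ p = 13)
    {l t b : ℚ} (hl : l ≠ 0) (ht : t ≠ 0)
    (hF : ∀ i, l * FA 2 phiF phiG !![t, b; 0, 1] i ∈ (algebraMap ℤ ℚ).range)
    (hG : ∀ i, l * GA 2 phiF phiG !![t, b; 0, 1] i ∈ (algebraMap ℤ ℚ).range) :
    0 ≤ padicValRat p (l ^ 2 * t ^ 3) := by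
  have : Fact p.Prime := ⟨by rcases hp with rfl | rfl | rfl | rfl <;> norm_num⟩
  set m := b.num
  set n : ℤ := (b.den : ℤ)
  have hn : (n : ℚ) ≠ 0 := by simp [n]
  have hb : b = m / n := (Rat.num_div_den b).symm
  have eG2 : GA 2 phiF phiG !![t, b; 0, 1] 2 = t ^ 3 := by
    simp [GA_two, quadSubst, phiF, phiG]
    ring
  have eG0 : l * GA 2 phiF phiG !![t, b; 0, 1] 0 = l * t / n ^ 2 * (formG0 m n : ℤ) := by
    simp [GA_two, quadSubst, phiF, phiG, formG0, hb]
    field_simp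
    ring
  have eF1 : l * FA 2 phiF phiG !![t, b; 0, 1] 1 = l * t / n ^ 2 * (formF1 m n : ℤ) := by
    simp [FA_two, quadSubst, phiF, phiG, formF1, hb]
    field_simp
    ring
  have eF0 : l * FA 2 phiF phiG !![t, b; 0, 1] 0 = l / n ^ 3 * (formF0 m n : ℤ) := by
    simp [FA_two, quadSubst, phiF, phiG, formF0, hb]
    field_simp
    ring
  have hvn : 0 ≤ padicValRat p n := padicValRat_nonneg_of_mem_range ⟨n, rfl⟩
  have hv3 := padicValRat_nonneg_of_mem_range (p := p) (eG2 ▸ hG 2)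
  rw [padicValRat.mul hl (pow_ne_zero 3 ht), padicValRat.pow t] at hv3
  rw [padicValRat.mul (pow_ne_zero 2 hl) (pow_ne_zero 3 ht), padicValRat.pow l,
    padicValRat.pow t]
  by_contra hneg
  -- With `v l + 3 v t ≥ 0`, a negative `2 v l + 3 v t` forces `v l + v t ≤ -1` and `v l ≤ -2`.
  have hv1 : padicValRat p (l * t / n ^ 2) =
      padicValRat p l + padicValRat p t - 2 * padicValRat p n := by
    rw [padicValRat.div (mul_ne_zero hl ht) (pow_ne_zero 2 hn), padicValRat.mul hl ht,
      padicValRat.pow (n : ℚ)]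
    push_cast
    ring
  have hv0 : padicValRat p (l / n ^ 3) = padicValRat p l - 3 * padicValRat p n := by
    rw [padicValRat.div hl (pow_ne_zero 3 hn), padicValRat.pow (n : ℚ)]
    push_cast
    ring
  have hx1 : l * t / n ^ 2 ≠ 0 := by positivity
  have hx0 : l / n ^ 3 ≠ 0 := by positivity
  have hmn : IsCoprime m n := by rw [Int.isCoprime_iff_gcd_eq_one]; exact b.reduced
  apply false_of_forms_dvd hp hmn
  · simpa using pow_dvd_of_mul_intCast_mem_range (k := 1) hx1 (eG0 ▸ hG 0) (by omega)
  · simpa using pow_dvd_of_mul_intCast_mem_range (k := 1) hx1 (eF1 ▸ hF 1) (by omega)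
  · exact pow_dvd_of_mul_intCast_mem_range (k := 2) hx0 (eF0 ▸ hF 0) (by omega)

lemma resIdeal_phiF_phiG_le : ResIdeal ℤ 2 phiF phiG ≤ Ideal.span {218618400} := by
  rw [ResIdeal, Ideal.span_le]
  rintro r ⟨l, A, hl, hA, hF, hG, hr⟩
  obtain ⟨l', t, b, hl', ht, hscale, hF', hG'⟩ :=
    exists_affine_integral_model phiF phiG hl hA hF hG
  have hs : (l' ^ 2 * t ^ 3) ^ 2 * 218618400 = r := by
    rw [eq_intCast] at hr
    rw [hr, sylRes_FA_GA_two, sylRes_phiF_phiG, hscale]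
    ring
  have hden := Rat.den_eq_one_of_sq_mul_eq_intCast hs fun p hp hp2 =>
    padicValRat_sq_mul_pow_three_nonneg (hp.eq_of_sq_dvd_218618400 hp2) hl' ht hF' hG'
  rw [SetLike.mem_coe, Ideal.mem_span_singleton]
  refine ⟨(l' ^ 2 * t ^ 3).num ^ 2, ?_⟩
  rw [← Rat.coe_int_num_of_den_eq_one hden] at hs
  exact_mod_cast hs.symm.trans (mul_comm _ _)

/-- For `φ(z) = (86z² − 1068z − 338)/(z² + 7z − 338)`, the model
`[86X² − 1068XY − 338Y², X² + 7XY − 338Y²]` is a `ℤ`-minimal model of `[φ]`, and the first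
eight points of the forward orbit of `0` under `φ` are `0, 1, 4, 11, 12, 7, 15, −374` (with
nonvanishing denominators along the way); in particular the orbit of `0` contains at least `8`
integers. -/
theorem statement18 (f g : ℕ → ℚ) (φ : ℚ → ℚ)
    (hfdef : f = fun i => if i = 0 then -338 else if i = 1 then -1068 else
      if i = 2 then 86 else 0)
    (hgdef : g = fun i => if i = 0 then -338 else if i = 1 then 7 else
      if i = 2 then 1 else 0)
    (hφ : φ = fun z => (86 * z ^ 2 - 1068 * z - 338) / (z ^ 2 + 7 * z - 338)) :
    -- the model is ℤ-minimal
    (∃ r : ℤ, (r : ℚ) = sylRes 2 2 f g ∧ ResIdeal ℤ 2 f g = Ideal.span {r}) ∧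
    -- the denominator does not vanish along the initial orbit of 0
    (∀ z ∈ ({0, 1, 4, 11, 12, 7, 15} : Set ℚ), z ^ 2 + 7 * z - 338 ≠ 0) ∧
    -- the first eight points of the orbit of 0 are integers
    φ^[0] 0 = 0 ∧ φ^[1] 0 = 1 ∧ φ^[2] 0 = 4 ∧ φ^[3] 0 = 11 ∧
    φ^[4] 0 = 12 ∧ φ^[5] 0 = 7 ∧ φ^[6] 0 = 15 ∧ φ^[7] 0 = -374 := by
  obtain rfl : f = phiF := hfdef
  obtain rfl : g = phiG := hgdef
  subst hφ
  have hres : ((218618400 : ℤ) : ℚ) = sylRes 2 2 phiF phiG := by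
    rw [sylRes_phiF_phiG]
    norm_num
  refine ⟨⟨218618400, hres, le_antisymm resIdeal_phiF_phiG_le ?_⟩, ?_, ?_⟩
  · rw [Ideal.span_le, Set.singleton_subset_iff]
    exact mem_resIdeal_two phiF_mem_range phiG_mem_range hres
  · rintro z (rfl | rfl | rfl | rfl | rfl | rfl | rfl) <;> norm_num
  · norm_num [Function.iterate_succ_apply']

end
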